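/- If S ⊆ V is not a vertex cover of G (i.e., some edge of G has neither endpoint in S), then there exists a core element y ∈ core(G_0[Π(S)]) with y_α = 1; hence min_{y ∈ core(G_0[Π(S)])}(1 − y_α) = 0. -/

import Mathlib

/-- A finite graph: a finite vertex set and a finite set of (oriented representatives of) edges. -/
structure FinGraph (α : Type*) where
  verts : Finset α
  edges : Finset (α × α)

namespace FinGraph

variable {α : Type*}

/-- A matching: a set of edges of `G` that are pairwise vertex-disjoint. -/
def IsMatching (G : FinGraph α) (M : Finset (α × α)) : Prop :=
  M ⊆ G.edges ∧ ∀ e ∈ M, ∀ f ∈ M, e ≠ f →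
    e.1 ≠ f.1 ∧ e.1 ≠ f.2 ∧ e.2 ≠ f.1 ∧ e.2 ≠ f.2

open Classical in
/-- `ν(G)`: the maximum cardinality of a matching of `G`. -/
noncomputable def nu (G : FinGraph α) : ℕ :=
  (G.edges.powerset.filter fun M => G.IsMatching M).sup Finset.card

/-- Well-formedness: edges join two distinct vertices of the graph. -/
def WF (G : FinGraph α) : Prop :=
  ∀ e ∈ G.edges, e.1 ∈ G.verts ∧ e.2 ∈ G.verts ∧ e.1 ≠ e.2

/-- `G` is bipartite with parts `V1`, `V2` (edges oriented from `V1` to `V2`). -/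
def Bipartition [DecidableEq α] (G : FinGraph α) (V1 V2 : Finset α) : Prop :=
  G.verts ⊆ V1 ∪ V2 ∧ ∀ e ∈ G.edges, e.1 ∈ V1 ∧ e.2 ∈ V2

/-- The core of the assignment game on `G`: minimum fractional vertex covers of value `ν(G)`. -/
noncomputable def core (G : FinGraph α) : Set (α → ℝ) :=
  {y | (∀ v ∈ G.verts, 0 ≤ y v) ∧ (∀ e ∈ G.edges, 1 ≤ y e.1 + y e.2) ∧
    ∑ v ∈ G.verts, y v = (G.nu : ℝ)}

/-- The subgraph of `G` induced by the vertex set `U`. -/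
def induce [DecidableEq α] (G : FinGraph α) (U : Finset α) : FinGraph α :=
  ⟨G.verts ∩ U, G.edges.filter fun e => e.1 ∈ U ∧ e.2 ∈ U⟩

end FinGraph

/-- A real number is integral if it is an integer. -/
def IntegralReal (x : ℝ) : Prop := ∃ n : ℤ, x = (n : ℝ)

open FinGraph

variable {V : Type*} [Fintype V] [DecidableEq V]

/-- The degree of `v`: the number of edges of `E` containing `v`. -/
def degE (E : Finset (Sym2 V)) (v : V) : ℕ := (E.filter fun e => v ∈ e).card

/-- The vertex universe of the hardness-reduction graph: copies `(v, j)` of original vertices,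
edge-vertices, and three extra vertices `α = redAlpha`, `β₁ = redBeta1`, `β₂ = redBeta2`. -/
abbrev RedVert (V : Type*) : Type _ := (V × ℕ) ⊕ (Sym2 V ⊕ Fin 3)

/-- The copy-vertex `v_j`. -/
def redCopy (v : V) (j : ℕ) : RedVert V := Sum.inl (v, j)

/-- The edge-vertex corresponding to `e`. -/
def redEdgeVert (e : Sym2 V) : RedVert V := Sum.inr (Sum.inl e)

/-- The special vertex `α`. -/
def redAlpha (V : Type*) : RedVert V := Sum.inr (Sum.inr 0)

/-- The special vertex `β₁`. -/
def redBeta1 (V : Type*) : RedVert V := Sum.inr (Sum.inr 1)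

/-- The special vertex `β₂`. -/
def redBeta2 (V : Type*) : RedVert V := Sum.inr (Sum.inr 2)

/-- The hardness-reduction graph `G₀` built from the graph `G = (V, E)`:
vertices are the copies `v_1, …, v_{d_v}` for `v ∈ V`, the edge-vertices `e ∈ E`, and
`α, β₁, β₂`; edges join each edge-vertex `e` to every copy of each endpoint of `e`, and `α`
to every edge-vertex and to `β₁` and `β₂`. -/
def redGraph (E : Finset (Sym2 V)) : FinGraph (RedVert V) where
  verts :=
    (Finset.univ.biUnion fun v : V =>
        (Finset.range (degE E v)).image fun j => redCopy v j)
      ∪ E.image redEdgeVert ∪ {redAlpha V, redBeta1 V, redBeta2 V}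
  edges :=
    (E.biUnion fun e =>
        (Finset.univ.filter fun v : V => v ∈ e).biUnion fun v =>
          (Finset.range (degE E v)).image fun j => (redEdgeVert e, redCopy v j))
      ∪ E.image (fun e => (redAlpha V, redEdgeVert e))
      ∪ {(redAlpha V, redBeta1 V), (redAlpha V, redBeta2 V)}

/-- `Π(S)`: the copies of the vertices of `S`, all edge-vertices, and `α`. -/
def redPi (E : Finset (Sym2 V)) (S : Finset V) : Finset (RedVert V) :=
  (S.biUnion fun v => (Finset.range (degE E v)).image fun j => redCopy v j)
    ∪ E.image redEdgeVert ∪ {redAlpha V}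

/-- `S` is a vertex cover of `(V, E)`. -/
def IsVCover (E : Finset (Sym2 V)) (S : Finset V) : Prop :=
  ∀ e ∈ E, ∃ v ∈ S, v ∈ e

/-!
Let `C` be the edges of `E` covered by `S` and `e₀ ∈ E` an uncovered one. Every edge of
`G₀[Π(S)]` has an endpoint among `α` and the edge-vertices of `C`, and matching each `c ∈ C` to
its own copy of a vertex of `S ∩ c`, and `e₀` to `α`, gives a matching of the same size. By weak
LP duality both are optimal, so the indicator of this vertex cover is a core element, and it has
`y_α = 1`. Conversely, since `αe₀` lies in a maximum matching, complementary slackness gives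
`y_α + y_{e₀} ≤ 1`, hence `y_α ≤ 1` for every core element `y`.
-/

namespace FinGraph

variable {α : Type*} {G : FinGraph α}

def IsFracCover (G : FinGraph α) (y : α → ℝ) : Prop :=
  (∀ v ∈ G.verts, 0 ≤ y v) ∧ ∀ e ∈ G.edges, 1 ≤ y e.1 + y e.2

lemma mem_core_iff {y : α → ℝ} :
    y ∈ G.core ↔ G.IsFracCover y ∧ ∑ v ∈ G.verts, y v = G.nu :=
  and_assoc.symm

lemma WF.induce [DecidableEq α] (hG : G.WF) (U : Finset α) : (G.induce U).WF := by
  intro e he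
  obtain ⟨he, h1, h2⟩ := Finset.mem_filter.mp he
  obtain ⟨h1', h2', hne⟩ := hG e he
  exact ⟨Finset.mem_inter.mpr ⟨h1', h1⟩, Finset.mem_inter.mpr ⟨h2', h2⟩, hne⟩

lemma isMatching_of_injOn {M : Finset (α × α)} (hsub : M ⊆ G.edges)
    (h₁ : Set.InjOn Prod.fst (M : Set (α × α))) (h₂ : Set.InjOn Prod.snd (M : Set (α × α)))
    (h₁₂ : ∀ e ∈ M, ∀ f ∈ M, e.1 ≠ f.2) : G.IsMatching M :=
  ⟨hsub, fun e he f hf hne =>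
    ⟨fun h => hne (h₁ he hf h), h₁₂ e he f hf, (h₁₂ f hf e he ·.symm),
      fun h => hne (h₂ he hf h)⟩⟩

lemma IsMatching.insert [DecidableEq α] {M : Finset (α × α)} {f : α × α} (hM : G.IsMatching M)
    (hf : f ∈ G.edges) (hfM : ∀ e ∈ M, f.1 ≠ e.1 ∧ f.1 ≠ e.2 ∧ f.2 ≠ e.1 ∧ f.2 ≠ e.2) :
    G.IsMatching (insert f M) := by
  refine ⟨Finset.insert_subset hf hM.1, fun e he e' he' hne => ?_⟩
  rcases Finset.mem_insert.mp he with rfl | heM <;>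
    rcases Finset.mem_insert.mp he' with rfl | he'M
  · exact absurd rfl hne
  · exact hfM e' he'M
  · obtain ⟨h₁, h₂, h₃, h₄⟩ := hfM e heM
    exact ⟨Ne.symm h₁, Ne.symm h₃, Ne.symm h₂, Ne.symm h₄⟩
  · exact hM.2 e heM e' he'M hne

lemma IsMatching.card_le_nu {M : Finset (α × α)} (hM : G.IsMatching M) : M.card ≤ G.nu := by
  classical
  exact Finset.le_sup (f := Finset.card) (Finset.mem_filter.mpr ⟨Finset.mem_powerset.mpr hM.1, hM⟩)

lemma exists_isMatching_card_eq_nu (G : FinGraph α) :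
    ∃ M, G.IsMatching M ∧ M.card = G.nu := by
  classical
  have hempty : ∅ ∈ G.edges.powerset.filter G.IsMatching :=
    Finset.mem_filter.mpr ⟨Finset.empty_mem_powerset _, Finset.empty_subset _, by simp⟩
  obtain ⟨M, hM, hcard⟩ := Finset.exists_mem_eq_sup _ ⟨_, hempty⟩ Finset.card
  exact ⟨M, (Finset.mem_filter.mp hM).2, by rw [nu, hcard]⟩

lemma IsMatching.sum_endpoints_le {M : Finset (α × α)} {y : α → ℝ} (hG : G.WF)
    (hM : G.IsMatching M) (hy : ∀ v ∈ G.verts, 0 ≤ y v) :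
    ∑ f ∈ M, (y f.1 + y f.2) ≤ ∑ v ∈ G.verts, y v := by
  classical
  have hdisj : (M : Set (α × α)).PairwiseDisjoint fun f => ({f.1, f.2} : Finset α) := by
    intro f hf f' hf' hne
    obtain ⟨d₁, d₂, d₃, d₄⟩ := hM.2 f hf f' hf' hne
    simp [Function.onFun, Finset.disjoint_left, *]
  calc ∑ f ∈ M, (y f.1 + y f.2)
      = ∑ f ∈ M, ∑ v ∈ {f.1, f.2}, y v :=
        Finset.sum_congr rfl fun f hf => (Finset.sum_pair (hG f (hM.1 hf)).2.2).symm
    _ = ∑ v ∈ M.biUnion fun f => {f.1, f.2}, y v := (Finset.sum_biUnion hdisj).symm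
    _ ≤ ∑ v ∈ G.verts, y v := by
        refine Finset.sum_le_sum_of_subset_of_nonneg ?_ fun v hv _ => hy v hv
        intro v hv
        obtain ⟨f, hf, hv⟩ := Finset.mem_biUnion.mp hv
        rcases Finset.mem_insert.mp hv with rfl | hv
        · exact (hG f (hM.1 hf)).1
        · exact Finset.mem_singleton.mp hv ▸ (hG f (hM.1 hf)).2.1

lemma IsMatching.card_le_sum {M : Finset (α × α)} {y : α → ℝ} (hG : G.WF)
    (hM : G.IsMatching M) (hy : G.IsFracCover y) : (M.card : ℝ) ≤ ∑ v ∈ G.verts, y v := by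
  calc (M.card : ℝ) = M.card • (1 : ℝ) := by simp
    _ ≤ ∑ f ∈ M, (y f.1 + y f.2) := Finset.card_nsmul_le_sum _ _ _ fun f hf => hy.2 f (hM.1 hf)
    _ ≤ _ := hM.sum_endpoints_le hG hy.1

lemma nu_le_sum {y : α → ℝ} (hG : G.WF) (hy : G.IsFracCover y) :
    (G.nu : ℝ) ≤ ∑ v ∈ G.verts, y v := by
  obtain ⟨M, hM, hcard⟩ := G.exists_isMatching_card_eq_nu
  exact hcard ▸ hM.card_le_sum hG hy

lemma isFracCover_indicator [DecidableEq α] {T : Finset α}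
    (hT : ∀ e ∈ G.edges, e.1 ∈ T ∨ e.2 ∈ T) :
    G.IsFracCover fun v => if v ∈ T then 1 else 0 := by
  refine ⟨fun v _ => by dsimp only; split_ifs <;> norm_num, fun e he => ?_⟩
  rcases hT e he with h | h <;> simp only [h, if_true] <;> split_ifs <;> norm_num

/-- A matching and a vertex cover of the same size certify each other's optimality. -/
lemma IsMatching.indicator_mem_core [DecidableEq α] {M : Finset (α × α)} {T : Finset α}
    (hG : G.WF) (hM : G.IsMatching M) (hT : ∀ e ∈ G.edges, e.1 ∈ T ∨ e.2 ∈ T)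
    (hcard : T.card ≤ M.card) :
    (fun v => if v ∈ T then 1 else 0) ∈ G.core ∧ M.card = G.nu := by
  have hcover := isFracCover_indicator hT
  have hsum : ∑ v ∈ G.verts, (if v ∈ T then (1 : ℝ) else 0) ≤ T.card := by
    rw [Finset.sum_boole]
    exact_mod_cast Finset.card_le_card fun v hv => (Finset.mem_filter.mp hv).2
  have hnu := nu_le_sum hG hcover
  have hM' : (M.card : ℝ) ≤ G.nu := by exact_mod_cast hM.card_le_nu
  have hTM : (T.card : ℝ) ≤ M.card := by exact_mod_cast hcard
  refine ⟨mem_core_iff.mpr ⟨hcover, by linarith⟩, ?_⟩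
  exact_mod_cast (show (M.card : ℝ) = G.nu by linarith)

/-- Complementary slackness for the edges of a maximum matching. -/
lemma core_endpoints_le_one {M : Finset (α × α)} {y : α → ℝ} {f : α × α} (hG : G.WF)
    (hy : y ∈ G.core) (hM : G.IsMatching M) (hcard : M.card = G.nu) (hf : f ∈ M) :
    y f.1 + y f.2 ≤ 1 := by
  classical
  obtain ⟨hcover, hsum⟩ := mem_core_iff.mp hy
  have hrest : ((M.erase f).card : ℝ) ≤ ∑ g ∈ M.erase f, (y g.1 + y g.2) := by
    calc ((M.erase f).card : ℝ) = (M.erase f).card • (1 : ℝ) := by simp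
      _ ≤ _ := Finset.card_nsmul_le_sum _ _ _ fun g hg =>
        hcover.2 g (hM.1 (Finset.mem_of_mem_erase hg))
  have hsplit := Finset.sum_erase_add M (fun g => y g.1 + y g.2) hf
  have hle := hM.sum_endpoints_le hG hcover.1
  have hcard' : ((M.erase f).card : ℝ) + 1 = M.card := by
    exact_mod_cast Finset.card_erase_add_one hf
  rw [hsum, ← hcard] at hle
  linarith

end FinGraph

lemma Finset.exists_injOn_lt_card {β : Type*} (s : Finset β) :
    ∃ f : β → ℕ, (∀ b ∈ s, f b < s.card) ∧ Set.InjOn f s := by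
  classical
  refine ⟨fun b => if h : b ∈ s then s.equivFin ⟨b, h⟩ else 0, fun b hb => by simp [hb],
    fun a ha b hb h => ?_⟩
  simp only [Finset.mem_coe] at ha hb
  simp only [dif_pos ha, dif_pos hb, Fin.val_inj, EmbeddingLike.apply_eq_iff_eq] at h
  exact congrArg Subtype.val h

lemma redEdgeVert_injective {V : Type*} :
    Function.Injective (redEdgeVert : Sym2 V → RedVert V) :=
  Sum.inr_injective.comp Sum.inl_injective

lemma mem_redPi {V : Type*} [DecidableEq V] (E : Finset (Sym2 V)) (S : Finset V)
    (x : RedVert V) :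
    x ∈ redPi E S ↔ (∃ v ∈ S, ∃ j < degE E v, x = redCopy v j) ∨
      (∃ e ∈ E, x = redEdgeVert e) ∨ x = redAlpha V := by
  simp only [redPi, Finset.mem_union, Finset.mem_biUnion, Finset.mem_image, Finset.mem_range,
    Finset.mem_singleton, eq_comm, or_assoc]

lemma mem_redGraph_edges (E : Finset (Sym2 V)) (f : RedVert V × RedVert V) :
    f ∈ (redGraph E).edges ↔
      (∃ e ∈ E, ∃ v, v ∈ e ∧ ∃ j < degE E v, f = (redEdgeVert e, redCopy v j)) ∨
      (∃ e ∈ E, f = (redAlpha V, redEdgeVert e)) ∨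
      f = (redAlpha V, redBeta1 V) ∨ f = (redAlpha V, redBeta2 V) := by
  simp only [redGraph, Finset.mem_union, Finset.mem_biUnion, Finset.mem_image,
    Finset.mem_insert, Finset.mem_singleton, Finset.mem_range, Finset.mem_univ,
    Finset.mem_filter, true_and, eq_comm, or_assoc]

lemma redGraph_wf (E : Finset (Sym2 V)) : (redGraph E).WF := by
  intro f hf
  rcases (mem_redGraph_edges E f).mp hf with
    ⟨e, he, v, -, j, hj, rfl⟩ | ⟨e, he, rfl⟩ | rfl | rfl <;>
  simp [redGraph, redCopy, redEdgeVert, redAlpha, redBeta1, redBeta2, *]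

lemma mem_induce_redPi_edges (E : Finset (Sym2 V)) (S : Finset V) (f : RedVert V × RedVert V) :
    f ∈ ((redGraph E).induce (redPi E S)).edges ↔
      (∃ e ∈ E, ∃ v ∈ S, v ∈ e ∧ ∃ j < degE E v, f = (redEdgeVert e, redCopy v j)) ∨
      (∃ e ∈ E, f = (redAlpha V, redEdgeVert e)) := by
  simp only [FinGraph.induce, Finset.mem_filter, mem_redGraph_edges, mem_redPi]
  constructor
  · rintro ⟨⟨e, he, v, hv, j, hj, rfl⟩ | ⟨e, he, rfl⟩ | rfl | rfl, -, h⟩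
    · simp only [redCopy, redEdgeVert, redAlpha, Sum.inl.injEq, Prod.mk.injEq, reduceCtorEq,
        exists_false, and_false, or_false] at h
      obtain ⟨v', hv', j', -, rfl, rfl⟩ := h
      exact Or.inl ⟨e, he, v, hv', hv, j, hj, rfl⟩
    · exact Or.inr ⟨e, he, rfl⟩
    all_goals simp [redCopy, redEdgeVert, redAlpha, redBeta1, redBeta2] at h
  · rintro (⟨e, he, v, hvS, hv, j, hj, rfl⟩ | ⟨e, he, rfl⟩)
    · exact ⟨Or.inl ⟨e, he, v, hv, j, hj, rfl⟩, Or.inr (Or.inl ⟨e, he, rfl⟩),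
        Or.inl ⟨v, hvS, j, hj, rfl⟩⟩
    · exact ⟨Or.inr (Or.inl ⟨e, he, rfl⟩), Or.inr (Or.inr rfl), Or.inr (Or.inl ⟨e, he, rfl⟩)⟩

/-- Each edge of `E` covered by `S` is matched to its own copy of a covering vertex (distinct edges
at the same vertex get distinct copies), and the uncovered edge `e₀` is matched to `α`. -/
lemma exists_isMatching_fst_cover (E : Finset (Sym2 V)) (S : Finset V) {e₀ : Sym2 V}
    (he₀ : e₀ ∈ E) (h₀ : ¬ ∃ v ∈ S, v ∈ e₀) :
    ∃ M, ((redGraph E).induce (redPi E S)).IsMatching M ∧ (redAlpha V, redEdgeVert e₀) ∈ M ∧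
      ∀ f ∈ ((redGraph E).induce (redPi E S)).edges, f.1 ∈ M.image Prod.fst := by
  set C := E.filter fun e => ∃ v ∈ S, v ∈ e
  have : Nonempty V := ⟨(Quot.out e₀).1⟩
  choose! σ hσS hσe using fun e (he : e ∈ C) => (Finset.mem_filter.mp he).2
  choose idx hidx_lt hidx_inj using fun v => (E.filter fun e => v ∈ e).exists_injOn_lt_card
  set g := fun e => (redEdgeVert e, redCopy (σ e) (idx (σ e) e))
  have hgE : ∀ e ∈ C, g e ∈ ((redGraph E).induce (redPi E S)).edges := fun e he =>
    (mem_induce_redPi_edges E S _).mpr <| Or.inl ⟨e, (Finset.mem_filter.mp he).1, σ e, hσS e he,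
      hσe e he, _, hidx_lt _ e (Finset.mem_filter.mpr ⟨(Finset.mem_filter.mp he).1, hσe e he⟩), rfl⟩
  have hsnd : Set.InjOn (Prod.snd ∘ g) C := by
    intro a ha b hb h
    simp only [Function.comp_apply, g, redCopy, Sum.inl.injEq, Prod.mk.injEq] at h
    obtain ⟨hσ, hidx⟩ := h
    refine hidx_inj (σ a) ?_ ?_ (hσ ▸ hidx)
    · exact Finset.mem_filter.mpr ⟨(Finset.mem_filter.mp ha).1, hσe a ha⟩
    · exact Finset.mem_filter.mpr ⟨(Finset.mem_filter.mp hb).1, hσ ▸ hσe b hb⟩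
  have hmatch : ((redGraph E).induce (redPi E S)).IsMatching (C.image g) := by
    refine isMatching_of_injOn ?_ ?_ ?_ ?_
    · simpa only [Finset.image_subset_iff] using hgE
    · rw [Finset.coe_image]
      exact Set.InjOn.image_of_comp (g := Prod.fst) redEdgeVert_injective.injOn
    · rw [Finset.coe_image]
      exact hsnd.image_of_comp
    · simp [g, redEdgeVert, redCopy]
  refine ⟨insert (redAlpha V, redEdgeVert e₀) (C.image g), hmatch.insert ?_ ?_,
    Finset.mem_insert_self _ _, ?_⟩
  · exact (mem_induce_redPi_edges E S _).mpr (Or.inr ⟨e₀, he₀, rfl⟩)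
  · simp only [Finset.mem_image]
    rintro _ ⟨e, he, rfl⟩
    refine ⟨by simp [g, redAlpha, redEdgeVert], by simp [g, redAlpha, redCopy], ?_,
      by simp [g, redEdgeVert, redCopy]⟩
    exact fun h => h₀ (redEdgeVert_injective h ▸ (Finset.mem_filter.mp he).2)
  · intro f hf
    rcases (mem_induce_redPi_edges E S f).mp hf with ⟨e, he, v, hvS, hv, j, -, rfl⟩ | ⟨e, -, rfl⟩
    · exact Finset.mem_image.mpr ⟨g e, Finset.mem_insert_of_mem
        (Finset.mem_image_of_mem g (Finset.mem_filter.mpr ⟨he, v, hvS, hv⟩)), rfl⟩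
    · exact Finset.mem_image.mpr ⟨_, Finset.mem_insert_self _ _, rfl⟩

theorem redGraph_core_alpha_of_not_vcover_general (E : Finset (Sym2 V))
    (S : Finset V) (hS : ¬ IsVCover E S) :
    (∃ y ∈ ((redGraph E).induce (redPi E S)).core, y (redAlpha V) = 1) ∧
    sInf ((fun y : RedVert V → ℝ => 1 - y (redAlpha V)) ''
        ((redGraph E).induce (redPi E S)).core) = 0 := by
  obtain ⟨e₀, he₀, h₀⟩ : ∃ e₀ ∈ E, ¬ ∃ v ∈ S, v ∈ e₀ := by simpa [IsVCover] using hS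
  obtain ⟨M, hM, hαM, hcover⟩ := exists_isMatching_fst_cover E S he₀ h₀
  have hG := (redGraph_wf E).induce (redPi E S)
  obtain ⟨hcore, hcard⟩ := hM.indicator_mem_core hG (fun f hf => Or.inl (hcover f hf))
    Finset.card_image_le
  have hα : (redAlpha V, redEdgeVert e₀).1 ∈ M.image Prod.fst := Finset.mem_image_of_mem _ hαM
  have hle : ∀ y ∈ ((redGraph E).induce (redPi E S)).core, y (redAlpha V) ≤ 1 := by
    intro y hy
    have hslack := core_endpoints_le_one hG hy hM hcard hαM
    have hpos := hy.1 _ (hG _ (hM.1 hαM)).2.1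
    linarith
  refine ⟨⟨_, hcore, if_pos hα⟩, le_antisymm ?_ ?_⟩
  · exact csInf_le ⟨0, by rintro _ ⟨y, hy, rfl⟩; linarith [hle y hy]⟩
      ⟨_, hcore, by simp only [if_pos hα, sub_self]⟩
  · exact le_csInf ⟨_, _, hcore, rfl⟩ (by rintro _ ⟨y, hy, rfl⟩; linarith [hle y hy])

/-- If `S ⊆ V` is not a vertex cover of `G`, then there exists a core element of
the induced subgraph `G₀[Π(S)]` with `y_α = 1`; hence `min_{y ∈ core(G₀[Π(S)])} (1 - y_α) = 0`. -/
theorem redGraph_core_alpha_of_not_vcover (E : Finset (Sym2 V)) (hE : ∀ e ∈ E, ¬ e.IsDiag)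
    (S : Finset V) (hS : ¬ IsVCover E S) :
    (∃ y ∈ ((redGraph E).induce (redPi E S)).core, y (redAlpha V) = 1) ∧
    sInf ((fun y : RedVert V → ℝ => 1 - y (redAlpha V)) ''
        ((redGraph E).induce (redPi E S)).core) = 0 :=
  redGraph_core_alpha_of_not_vcover_general E S hS
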